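/- Let r ≥ 1 and let v be any vertex of the r-dimensional hypercube Q_r = □_{i=1}^r K₂. Then the betweenness centrality of v is B(v) = (r−2)·2^{r−2} + 1/2. -/

import Mathlib

open SimpleGraph Finset

/-- The number of shortest `u`-`v` paths (geodesics) in `G`:
the number of paths from `u` to `v` whose length equals the distance `d_G(u,v)`. -/
noncomputable def geodesicCount {V : Type*} (G : SimpleGraph V) (u v : V) : ℕ :=
  Nat.card {p : G.Walk u v // p.IsPath ∧ p.length = G.dist u v}

/-- The number of shortest `u`-`v` paths in `G` that pass through the vertex `x`. -/
noncomputable def geodesicCountThrough {V : Type*} (G : SimpleGraph V) (u v x : V) : ℕ :=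
  Nat.card {p : G.Walk u v // p.IsPath ∧ p.length = G.dist u v ∧ x ∈ p.support}

/-- The pair-dependency of the pair `{u,v}` on `x`:
`δ(u,v|x) = σ(u,v|x) / σ(u,v)`. -/
noncomputable def pairDependency {V : Type*} (G : SimpleGraph V) (u v x : V) : ℚ :=
  (geodesicCountThrough G u v x : ℚ) / (geodesicCount G u v : ℚ)

/-- The betweenness centrality of a vertex `x`: the sum of the pair-dependencies
`σ(u,v|x)/σ(u,v)` over unordered pairs `{u,v}` with `u ≠ v`, `u ≠ x`, `v ≠ x`
(each unordered pair is counted once, hence the factor `1/2` over ordered pairs). -/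
noncomputable def betweenness {V : Type*} [Fintype V] [DecidableEq V] (G : SimpleGraph V) (x : V) : ℚ :=
  (1 / 2) * ∑ u, ∑ v,
    if u ≠ v ∧ u ≠ x ∧ v ≠ x then pairDependency G u v x else 0

/-- The Cartesian (box) product of a family of graphs: two tuples are adjacent iff
they agree in all but one coordinate and differ by an edge in that coordinate. -/
def boxProdPi {ι : Type*} {V : ι → Type*} (G : ∀ i, SimpleGraph (V i)) :
    SimpleGraph (∀ i, V i) where
  Adj u v := ∃ i, (G i).Adj (u i) (v i) ∧ ∀ j, j ≠ i → u j = v j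
  symm := by
    constructor
    rintro u v ⟨i, hadj, heq⟩
    exact ⟨i, hadj.symm, fun j hj => (heq j hj).symm⟩
  loopless := by
    constructor
    rintro u ⟨i, hadj, -⟩
    exact (G i).irrefl hadj

/-!
In the Hamming graph `□ᵢ K_{β i}` the distance is the Hamming distance, and a geodesic from `u`
to `w` changes each coordinate where they differ exactly once, straight to its value in `w`;
so there are `d(u,w)!` geodesics. Any geodesic through `x` splits at `x` into two geodesics,
hence `σ(u,w|x) = σ(u,x) σ(x,w)` when `d(u,x) + d(x,w) = d(u,w)`, i.e. when the sets `S`, `T`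
of coordinates where `u`, `w` differ from `x` are disjoint, and `σ(u,w|x) = 0` otherwise. In the
hypercube `u ↦ S` is a bijection onto `Finset ι`, so `2 B(x)` is the sum of
`1 / C(|S| + |T|, |S|)` over disjoint nonempty `S`, `T`. Grouping by `U = S ∪ T`, the set `U`
contributes `∑_{0 < k < |U|} C(|U|, k) / C(|U|, k) = |U| - 1`, and
`∑_U (|U| - 1) = r 2^(r-1) - 2^r + 1`.
-/

section Geodesics

variable {V : Type*} {G : SimpleGraph V} {u v x : V}

/-- Shortest walks are paths (`Walk.isPath_of_length_eq_dist`), so these are exactly the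
geodesics counted by `geodesicCount`. -/
abbrev SimpleGraph.Geodesic (G : SimpleGraph V) (u v : V) : Type _ :=
  {p : G.Walk u v // p.length = G.dist u v}

lemma geodesicCount_eq_card (G : SimpleGraph V) (u v : V) :
    geodesicCount G u v = Nat.card (G.Geodesic u v) :=
  Nat.card_congr <| Equiv.subtypeEquivRight fun p =>
    ⟨And.right, fun h => ⟨p.isPath_of_length_eq_dist h, h⟩⟩

lemma geodesicCountThrough_eq_card (G : SimpleGraph V) (u v x : V) :
    geodesicCountThrough G u v x =
      Nat.card {p : G.Walk u v // p.length = G.dist u v ∧ x ∈ p.support} :=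
  Nat.card_congr <| Equiv.subtypeEquivRight fun p =>
    ⟨And.right, fun h => ⟨p.isPath_of_length_eq_dist h.1, h⟩⟩

lemma geodesicCount_self (G : SimpleGraph V) (u : V) : geodesicCount G u u = 1 := by
  rw [geodesicCount_eq_card, Nat.card_eq_one_iff_exists]
  refine ⟨⟨.nil, by simp⟩, fun ⟨p, hp⟩ => ?_⟩
  exact Subtype.ext (Walk.eq_nil_iff_nil.2 (Walk.length_eq_zero_iff.1 (by simpa using hp)))

lemma SimpleGraph.Walk.append_left_cancel {w : V} {p : G.Walk u v} {q q' : G.Walk v w}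
    (h : p.append q = p.append q') : q = q' := by
  induction p with
  | nil => simpa using h
  | cons _ _ ih => exact ih (by simpa using h)

lemma SimpleGraph.Walk.takeUntil_end_of_length_eq_dist [DecidableEq V] {p : G.Walk u v}
    (hp : p.length = G.dist u v) : p.takeUntil v p.end_mem_support = p := by
  have hspec := p.take_spec p.end_mem_support
  have hlen := congrArg Walk.length hspec
  rw [Walk.length_append] at hlen
  have : (p.dropUntil v p.end_mem_support).length = 0 := by
    have := G.dist_le (p.takeUntil v p.end_mem_support); omega
  rw [Walk.eq_nil_iff_nil.2 (Walk.length_eq_zero_iff.1 this), Walk.append_nil] at hspec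
  exact hspec

lemma dist_add_dist_eq_of_mem_support {p : G.Walk u v} (hp : p.length = G.dist u v)
    (hx : x ∈ p.support) : G.dist u x + G.dist x v = G.dist u v := by
  classical
  have hlen := congrArg Walk.length (p.take_spec hx)
  rw [Walk.length_append] at hlen
  have := G.dist_le (p.takeUntil x hx)
  have := G.dist_le (p.dropUntil x hx)
  have := (p.takeUntil x hx).reachable.dist_triangle_left v
  omega

def geodesicsThroughEquiv [DecidableEq V] (h : G.dist u x + G.dist x v = G.dist u v) :
    {p : G.Walk u v // p.length = G.dist u v ∧ x ∈ p.support} ≃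
      G.Geodesic u x × G.Geodesic x v where
  toFun p :=
    have hlen := congrArg Walk.length (p.1.take_spec p.2.2)
    have := G.dist_le (p.1.takeUntil x p.2.2)
    have := G.dist_le (p.1.dropUntil x p.2.2)
    (⟨p.1.takeUntil x p.2.2, by rw [Walk.length_append] at hlen; omega⟩,
      ⟨p.1.dropUntil x p.2.2, by rw [Walk.length_append] at hlen; omega⟩)
  invFun q := ⟨q.1.1.append q.2.1, by simp [q.1.2, q.2.2, h], by simp⟩
  left_inv p := Subtype.ext (p.1.take_spec p.2.2)
  right_inv := by
    rintro ⟨⟨q₁, h₁⟩, ⟨q₂, h₂⟩⟩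
    have htake : (q₁.append q₂).takeUntil x (by simp) = q₁ := by
      rw [Walk.takeUntil_append_of_mem_left _ _ q₁.end_mem_support,
        Walk.takeUntil_end_of_length_eq_dist h₁]
    refine Prod.ext (Subtype.ext htake) (Subtype.ext ?_)
    have hspec := (q₁.append q₂).take_spec (u := x) (by simp)
    rw [htake] at hspec
    exact Walk.append_left_cancel hspec

lemma geodesicCountThrough_eq (G : SimpleGraph V) (u v x : V) :
    geodesicCountThrough G u v x =
      if G.dist u x + G.dist x v = G.dist u v then geodesicCount G u x * geodesicCount G x v
      else 0 := by
  classical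
  rw [geodesicCountThrough_eq_card]
  split_ifs with h
  · rw [Nat.card_congr (geodesicsThroughEquiv h), Nat.card_prod, geodesicCount_eq_card,
      geodesicCount_eq_card]
  · have : IsEmpty {p : G.Walk u v // p.length = G.dist u v ∧ x ∈ p.support} :=
      ⟨fun p => h (dist_add_dist_eq_of_mem_support p.2.1 p.2.2)⟩
    exact Nat.card_of_isEmpty

lemma geodesicCount_eq_sum [Fintype V] [DecidableRel G.Adj] (huv : u ≠ v) :
    geodesicCount G u v =
      ∑ w with G.Adj u w ∧ G.dist w v + 1 = G.dist u v, geodesicCount G w v := by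
  classical
  let cons : (Σ w : {w // G.Adj u w ∧ G.dist w v + 1 = G.dist u v}, G.Geodesic w v) →
      G.Geodesic u v := fun q => ⟨.cons q.1.2.1 q.2.1, by simp [q.2.2, q.1.2.2]⟩
  have hcons : Function.Bijective cons := by
    constructor
    · rintro ⟨⟨w, hw⟩, q, hq⟩ ⟨⟨w', hw'⟩, q', hq'⟩ h
      simp only [cons, Subtype.mk.injEq, Walk.cons.injEq] at h
      obtain ⟨rfl, h⟩ := h
      cases eq_of_heq h
      rfl
    · rintro ⟨p, hp⟩
      cases p with
      | nil => exact absurd rfl huv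
      | @cons _ w _ hadj q =>
        have := G.dist_le q
        have := hadj.reachable.dist_triangle_left v
        rw [G.dist_eq_one_iff_adj.2 hadj] at this
        rw [Walk.length_cons] at hp
        have hq : q.length = G.dist w v := by omega
        exact ⟨⟨⟨w, hadj, by omega⟩, q, hq⟩, rfl⟩
  simp only [geodesicCount_eq_card]
  rw [← Nat.card_congr (Equiv.ofBijective cons hcons), Nat.card_sigma]
  symm
  exact Finset.sum_subtype _ (by simp) _

end Geodesics

section HammingGraph

variable {ι : Type*} {β : ι → Type*}

/-- The Hamming graph `□ᵢ K_{β i}`; the hypercube is the case `β i = Fin 2`. -/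
def hammingGraph (β : ι → Type*) : SimpleGraph (∀ i, β i) :=
  boxProdPi fun i => (⊤ : SimpleGraph (β i))

lemma hammingGraph_adj_iff [DecidableEq ι] {u w : ∀ i, β i} :
    (hammingGraph β).Adj u w ↔ ∃ i, u i ≠ w i ∧ w = Function.update u i (w i) := by
  simp only [hammingGraph, boxProdPi, top_adj]
  constructor
  · rintro ⟨i, hi, hj⟩
    refine ⟨i, hi, funext fun j => ?_⟩
    by_cases hji : j = i
    · subst hji; simp
    · simp [hji, hj j hji]
  · rintro ⟨i, hi, hw⟩
    refine ⟨i, hi, fun j hj => ?_⟩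
    rw [hw, Function.update_of_ne hj]

lemma hammingGraph_adj_update [DecidableEq ι] {u : ∀ i, β i} {i : ι} {a : β i} (h : u i ≠ a) :
    (hammingGraph β).Adj u (Function.update u i a) :=
  hammingGraph_adj_iff.2 ⟨i, by simpa, by simp⟩

variable [Fintype ι] [∀ i, DecidableEq (β i)]

lemma hammingDist_add_hammingDist_eq_iff {u w x : ∀ i, β i} :
    hammingDist u x + hammingDist x w = hammingDist u w ↔
      Disjoint ({i | u i ≠ x i} : Finset ι) ({i | w i ≠ x i} : Finset ι) := by
  simp only [hammingDist, Finset.card_filter, ← Finset.sum_add_distrib]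
  rw [eq_comm, Finset.sum_eq_sum_iff_of_le fun i _ => by split_ifs <;> simp_all,
    Finset.disjoint_filter]
  refine forall₂_congr fun i _ => ?_
  grind

variable [DecidableEq ι]

lemma hammingDist_update_add (u v : ∀ i, β i) (i : ι) (a : β i) :
    hammingDist (Function.update u i a) v + (if u i = v i then 0 else 1) =
      hammingDist u v + (if a = v i then 0 else 1) := by
  simp only [hammingDist, Finset.card_filter]
  rw [← Finset.add_sum_erase _ _ (Finset.mem_univ i),
    ← Finset.add_sum_erase _ _ (Finset.mem_univ i),
    Finset.sum_congr rfl fun j hj => by rw [Function.update_of_ne (Finset.ne_of_mem_erase hj)]]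
  simp only [Function.update_self, ne_eq, ite_not]
  split_ifs <;> omega

lemma hammingDist_update_add_one {u v : ∀ i, β i} {i : ι} (h : u i ≠ v i) :
    hammingDist (Function.update u i (v i)) v + 1 = hammingDist u v := by
  simpa [h] using hammingDist_update_add u v i (v i)

lemma hammingDist_le_length {u v : ∀ i, β i} (p : (hammingGraph β).Walk u v) :
    hammingDist u v ≤ p.length := by
  induction p with
  | nil => simp
  | @cons u w v hadj p ih =>
    obtain ⟨i, -, hw⟩ := hammingGraph_adj_iff.1 hadj
    have := hammingDist_update_add u v i (w i)
    rw [← hw] at this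
    rw [Walk.length_cons]
    split_ifs at this <;> omega

lemma exists_walk_length_eq_hammingDist (u v : ∀ i, β i) :
    ∃ p : (hammingGraph β).Walk u v, p.length = hammingDist u v := by
  induction h : hammingDist u v generalizing u with
  | zero => obtain rfl := hammingDist_eq_zero.1 h; exact ⟨.nil, rfl⟩
  | succ n ih =>
    obtain ⟨i, hi⟩ := Function.ne_iff.1 (hammingDist_ne_zero.1 (by omega : hammingDist u v ≠ 0))
    obtain ⟨q, hq⟩ :=
      ih (Function.update u i (v i)) (by have := hammingDist_update_add_one hi; omega)
    exact ⟨.cons (hammingGraph_adj_update hi) q, by simp [hq]⟩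

lemma dist_hammingGraph (u v : ∀ i, β i) : (hammingGraph β).dist u v = hammingDist u v := by
  obtain ⟨p, hp⟩ := exists_walk_length_eq_hammingDist u v
  obtain ⟨q, hq⟩ := p.reachable.exists_walk_length_eq_dist
  exact le_antisymm (hp ▸ dist_le p) (hq ▸ hammingDist_le_length q)

lemma hammingGraph_adj_and_hammingDist_add_one_iff {u v w : ∀ i, β i} :
    (hammingGraph β).Adj u w ∧ hammingDist w v + 1 = hammingDist u v ↔
      ∃ i, u i ≠ v i ∧ w = Function.update u i (v i) := by
  constructor
  · rintro ⟨hadj, hd⟩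
    obtain ⟨i, -, hw⟩ := hammingGraph_adj_iff.1 hadj
    have := hammingDist_update_add u v i (w i)
    rw [← hw] at this
    have hu : u i ≠ v i := fun hu => by split_ifs at this <;> omega
    have hwi : w i = v i := by by_contra hwi; simp only [hu, hwi, if_false] at this; omega
    exact ⟨i, hu, by rw [← hwi]; exact hw⟩
  · rintro ⟨i, hi, rfl⟩
    exact ⟨hammingGraph_adj_update hi, hammingDist_update_add_one hi⟩

lemma geodesicCount_hammingGraph [∀ i, Fintype (β i)] (u v : ∀ i, β i) :
    geodesicCount (hammingGraph β) u v = (hammingDist u v).factorial := by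
  classical
  induction h : hammingDist u v generalizing u with
  | zero => rw [hammingDist_eq_zero.1 h, geodesicCount_self, Nat.factorial_zero]
  | succ n ih =>
    have hnext : ({w | (hammingGraph β).Adj u w ∧
        (hammingGraph β).dist w v + 1 = (hammingGraph β).dist u v} : Finset _) =
        ({i | u i ≠ v i} : Finset ι).image fun i => Function.update u i (v i) := by
      ext w
      simp only [Finset.mem_filter_univ, dist_hammingGraph,
        hammingGraph_adj_and_hammingDist_add_one_iff, Finset.mem_image]
      simp [eq_comm]
    have hinj : Set.InjOn (fun i => Function.update u i (v i)) ({i | u i ≠ v i} : Finset ι) := by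
      intro i hi j _ hij
      by_contra hne
      have := congrFun hij i
      simp only [Function.update_self, Function.update_of_ne hne] at this
      simp [this] at hi
    rw [geodesicCount_eq_sum (hammingDist_ne_zero.1 (by omega)), hnext, Finset.sum_image hinj,
      Finset.sum_congr rfl fun i hi => ih _ ?_, Finset.sum_const, smul_eq_mul, ← hammingDist, h,
      Nat.factorial_succ]
    have := hammingDist_update_add_one ((Finset.mem_filter_univ i).1 hi)
    omega

lemma pairDependency_hammingGraph [∀ i, Fintype (β i)] (u w x : ∀ i, β i) :
    pairDependency (hammingGraph β) u w x =
      if Disjoint ({i | u i ≠ x i} : Finset ι) ({i | w i ≠ x i} : Finset ι) then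
        (((hammingDist u x + hammingDist w x).choose (hammingDist u x) : ℕ) : ℚ)⁻¹
      else 0 := by
  rw [pairDependency, geodesicCountThrough_eq, dist_hammingGraph, dist_hammingGraph,
    dist_hammingGraph, hammingDist_comm w x]
  by_cases h : hammingDist u x + hammingDist x w = hammingDist u w
  · rw [if_pos h, if_pos (hammingDist_add_hammingDist_eq_iff.1 h), geodesicCount_hammingGraph,
      geodesicCount_hammingGraph, geodesicCount_hammingGraph, ← h]
    have := Nat.add_choose_mul_factorial_mul_factorial (hammingDist x w) (hammingDist u x)
    have hc : ((hammingDist x w + hammingDist u x).choose (hammingDist u x) : ℚ) ≠ 0 :=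
      Nat.cast_ne_zero.2 (Nat.choose_pos (Nat.le_add_left _ _)).ne'
    rw [add_comm (hammingDist u x), ← this]
    push_cast
    field_simp
  · rw [if_neg h, if_neg (mt hammingDist_add_hammingDist_eq_iff.2 h), Nat.cast_zero, zero_div]

end HammingGraph

section DisjointPairs

variable {α : Type*}

lemma sum_powerset_inv_choose [DecidableEq α] (U : Finset α) :
    ∑ S ∈ U.powerset, (if S.Nonempty ∧ S ≠ U then (((#U).choose #S : ℕ) : ℚ)⁻¹ else 0) =
      ((#U - 1 : ℕ) : ℚ) := by
  have hcard : ∀ S ∈ U.powerset, (S.Nonempty ∧ S ≠ U ↔ #S ≠ 0 ∧ #S ≠ #U) := fun S hS =>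
    and_congr Finset.card_ne_zero.symm
      (not_congr ⟨congrArg Finset.card,
        Finset.eq_of_subset_of_card_le (Finset.mem_powerset.1 hS) ∘ ge_of_eq⟩)
  rw [Finset.sum_congr rfl fun S hS => by rw [if_congr (hcard S hS) rfl rfl],
    Finset.sum_powerset_apply_card fun j =>
      if j ≠ 0 ∧ j ≠ #U then (((#U).choose j : ℕ) : ℚ)⁻¹ else 0]
  have hterm : ∀ j ∈ Finset.range (#U + 1),
      (#U).choose j • (if j ≠ 0 ∧ j ≠ #U then (((#U).choose j : ℕ) : ℚ)⁻¹ else 0) =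
        if j ∈ Finset.Ioo 0 #U then 1 else 0 := by
    intro j hj
    have : ((#U).choose j : ℚ) ≠ 0 :=
      Nat.cast_ne_zero.2 (Nat.choose_pos (Nat.lt_succ_iff.1 (Finset.mem_range.1 hj))).ne'
    simp only [nsmul_eq_mul, mul_ite, mul_inv_cancel₀ this, mul_zero, Finset.mem_Ioo]
    exact if_congr (by rw [Finset.mem_range] at hj; omega) rfl rfl
  have hIoo : Finset.Ioo 0 #U ⊆ Finset.range (#U + 1) := fun j hj => by
    rw [Finset.mem_Ioo] at hj
    rw [Finset.mem_range]
    omega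
  rw [Finset.sum_congr rfl hterm, Finset.sum_ite_mem, Finset.sum_const,
    Finset.inter_eq_right.2 hIoo, Nat.card_Ioo, nsmul_one, Nat.sub_zero]

variable [Fintype α]

lemma sum_sum_ite_disjoint [DecidableEq α] {M : Type*} [AddCommMonoid M]
    (f : Finset α → Finset α → M) :
    ∑ S, ∑ T, (if Disjoint S T then f S T else 0) = ∑ U, ∑ S ∈ U.powerset, f S (U \ S) := by
  simp only [← Finset.sum_filter]
  rw [Finset.sum_sigma', Finset.sum_sigma']
  refine Finset.sum_bij' (fun p _ => ⟨p.1 ∪ p.2, p.1⟩) (fun p _ => ⟨p.2, p.1 \ p.2⟩)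
    ?_ ?_ ?_ ?_ ?_
  · rintro ⟨S, T⟩ -
    exact Finset.mem_sigma.2 ⟨Finset.mem_univ _, Finset.mem_powerset.2 Finset.subset_union_left⟩
  · rintro ⟨U, S⟩ -
    simp [Finset.disjoint_sdiff]
  · rintro ⟨S, T⟩ h
    simp_all [Finset.union_sdiff_cancel_left]
  · rintro ⟨U, S⟩ h
    simp_all
  · rintro ⟨S, T⟩ h
    simp_all [Finset.union_sdiff_cancel_left]

lemma sum_sum_disjoint_inv_choose [DecidableEq α] :
    ∑ S : Finset α, ∑ T : Finset α,
      (if Disjoint S T ∧ S.Nonempty ∧ T.Nonempty then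
        (((#S + #T).choose #S : ℕ) : ℚ)⁻¹ else 0) =
      ∑ U : Finset α, ((#U - 1 : ℕ) : ℚ) := by
  simp only [ite_and (Disjoint _ _)]
  rw [sum_sum_ite_disjoint]
  refine Finset.sum_congr rfl fun U _ => ?_
  rw [← sum_powerset_inv_choose]
  refine Finset.sum_congr rfl fun S hS => ?_
  rw [Finset.mem_powerset] at hS
  have hne : (U \ S).Nonempty ↔ S ≠ U := by
    rw [Finset.sdiff_nonempty, Ne, Finset.Subset.antisymm_iff]
    tauto
  rw [add_comm, Finset.card_sdiff_add_card_eq_card hS]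
  exact if_congr (and_congr Iff.rfl hne) rfl rfl

lemma sum_card_finset : ∑ U : Finset α, #U = Fintype.card α * 2 ^ (Fintype.card α - 1) := by
  rw [← Finset.powerset_univ, Finset.sum_powerset_apply_card (fun n => n), Finset.card_univ]
  simp only [smul_eq_mul, mul_comm ((Fintype.card α).choose _), Nat.sum_range_mul_choose]

lemma sum_card_sub_one :
    ∑ U : Finset α, ((#U - 1 : ℕ) : ℚ) =
      Fintype.card α * 2 ^ (Fintype.card α - 1) - 2 ^ Fintype.card α + 1 := by
  classical
  have h : ∀ U : Finset α, ((#U - 1 : ℕ) : ℚ) = #U - 1 + if U = ∅ then 1 else 0 := by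
    intro U
    rcases U.eq_empty_or_nonempty with rfl | hU
    · simp
    · rw [Nat.cast_sub (Finset.card_pos.2 hU), if_neg hU.ne_empty, Nat.cast_one, add_zero]
  simp only [h, Finset.sum_add_distrib, Finset.sum_sub_distrib, Finset.sum_ite_eq',
    Finset.mem_univ, if_true, Finset.sum_const, Finset.card_univ, Fintype.card_finset]
  rw [← Nat.cast_sum, sum_card_finset]
  push_cast
  ring

end DisjointPairs

section Hypercube

variable {ι : Type*} [Fintype ι] [DecidableEq ι]

lemma bijective_filter_ne_fin_two (x : ι → Fin 2) :
    Function.Bijective fun u : ι → Fin 2 => ({i | u i ≠ x i} : Finset ι) := by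
  refine (Fintype.bijective_iff_injective_and_card _).2 ⟨fun u w h => funext fun i => ?_, by simp⟩
  have key : ∀ a b c : Fin 2, (a ≠ c ↔ b ≠ c) → a = b := by decide
  exact key _ _ (x i) (by simpa using congrArg (i ∈ ·) h)

lemma betweenness_hypercube_eq_sum (x : ι → Fin 2) :
    betweenness (hammingGraph fun _ : ι => Fin 2) x =
      1 / 2 * ∑ U : Finset ι, ((#U - 1 : ℕ) : ℚ) := by
  rw [betweenness, ← sum_sum_disjoint_inv_choose]
  congr 1
  have hbij := bijective_filter_ne_fin_two x
  rw [← hbij.sum_comp]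
  refine Finset.sum_congr rfl fun u _ => ?_
  rw [← hbij.sum_comp]
  refine Finset.sum_congr rfl fun w _ => ?_
  have hne : ∀ y : ι → Fin 2, ({i | y i ≠ x i} : Finset ι).Nonempty ↔ y ≠ x := fun y => by
    simp [Finset.filter_nonempty_iff, Function.ne_iff]
  by_cases hu : u = x
  · simp [hu]
  by_cases hw : w = x
  · simp [hw]
  by_cases huw : u = w
  · subst huw
    rw [if_neg (by tauto),
      if_neg fun h => h.2.1.ne_empty ((Finset.disjoint_self_iff_empty _).1 h.1)]
  rw [if_pos ⟨huw, hu, hw⟩, pairDependency_hammingGraph,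
    if_congr (and_iff_left ⟨(hne u).2 hu, (hne w).2 hw⟩) rfl rfl]
  rfl

end Hypercube

theorem betweenness_hypercube_general (r : ℕ) (v : Fin r → Fin 2) :
    betweenness (boxProdPi fun _ : Fin r => (⊤ : SimpleGraph (Fin 2))) v =
      ((r : ℚ) - 2) * (2 : ℚ) ^ ((r : ℤ) - 2) + 1 / 2 := by
  rw [show boxProdPi (fun _ : Fin r => (⊤ : SimpleGraph (Fin 2))) = hammingGraph fun _ => Fin 2
      from rfl, betweenness_hypercube_eq_sum, sum_card_sub_one, Fintype.card_fin]
  rcases r with _ | r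
  · norm_num
  · have h : (2 : ℚ) ^ ((↑(r + 1) : ℤ) - 2) = 2 ^ r / 2 := by
      rw [show ((r + 1 : ℕ) : ℤ) - 2 = (r : ℤ) - 1 by push_cast; ring, zpow_sub_one₀ two_ne_zero,
        zpow_natCast, div_eq_mul_inv]
    rw [h, Nat.add_sub_cancel]
    push_cast
    ring

/-- For `r ≥ 1` and any vertex `v` of the `r`-dimensional hypercube
`Q_r = □ᵢ K₂`, `B(v) = (r-2)·2^(r-2) + 1/2` (with `2^(r-2)` read as a rational power,
so that the formula also covers `r = 1`). -/
theorem betweenness_hypercube (r : ℕ) (hr : 1 ≤ r) (v : Fin r → Fin 2) :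
    betweenness (boxProdPi fun _ : Fin r => (⊤ : SimpleGraph (Fin 2))) v =
      ((r : ℚ) - 2) * (2 : ℚ) ^ ((r : ℤ) - 2) + 1 / 2 :=
  betweenness_hypercube_general r v
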